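/- arXiv:2101.04818 — 2 statements merged into one kernel-verified Lean document; each statement's English description precedes it below -/
import Mathlib

section
/- Let m ≥ 2 be even, let V be a set of m elements, let w assign a nonnegative real w(u,v) to each unordered pair of distinct elements of V, and let M be a perfect matching on V. Then Σ over unordered pairs {u,v} of distinct elements of V not belonging to M of w(u,v) ≤ (m−2)·max over perfect matchings M' on V of Σ_{{u,v}∈M'} w(u,v). -/
open Finset

/-- A hierarchical clustering tree: a rooted binary tree with leaves labelled by vertices. -/
inductive HC (V : Type*) where
  | leaf : V → HC V
  | node : HC V → HC V → HC V

namespace HC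

variable {V : Type*}

/-- The list of leaf labels of a tree, left to right. -/
def leafList : HC V → List V
  | .leaf v => [v]
  | .node l r => leafList l ++ leafList r

/-- The set of leaf labels of a tree. -/
def leaves [DecidableEq V] (t : HC V) : Finset V :=
  t.leafList.toFinset

/-- `t.cluster i j` is the leaf set of the subtree of `t` rooted at the least common
ancestor of the leaves `i` and `j` (i.e. `leaves(T[i ∨ j])`). -/
def cluster [DecidableEq V] : HC V → V → V → Finset V
  | .leaf v, _, _ => {v}
  | .node l r, i, j =>
    if i ∈ l.leaves ∧ j ∈ l.leaves then l.cluster i j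
    else if i ∈ r.leaves ∧ j ∈ r.leaves then r.cluster i j
    else (HC.node l r).leaves

/-- `t` is a hierarchical clustering tree on the whole vertex type `V`:
its leaves are in bijection with `V`. -/
def IsTreeOn [Fintype V] [DecidableEq V] (t : HC V) : Prop :=
  t.leafList.Nodup ∧ t.leaves = Finset.univ

/-- Sum of `f A B` over all internal nodes of the tree, where `A`, `B` are the
leaf sets of the two children of the internal node. -/
def internalSum [DecidableEq V] (f : Finset V → Finset V → ℝ) : HC V → ℝ
  | .leaf _ => 0
  | .node l r => f l.leaves r.leaves + internalSum f l + internalSum f r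

/-- The list of all subtrees of a tree. -/
def subtreesList : HC V → List (HC V)
  | .leaf v => [.leaf v]
  | .node l r => .node l r :: (subtreesList l ++ subtreesList r)

/-- Dasgupta's cost: sum over unordered pairs `{i,j}` of distinct vertices of
`w i j * |leaves(T[i ∨ j])|`. -/
noncomputable def cost [Fintype V] [DecidableEq V] (w : V → V → ℝ) (t : HC V) : ℝ :=
  (1 / 2) * ∑ p ∈ Finset.univ.offDiag, w p.1 p.2 * ((t.cluster p.1 p.2).card : ℝ)

/-- Moseley–Wang revenue: sum over unordered pairs `{i,j}` of distinct vertices of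
`w i j * |nonleaves(T[i ∨ j])|`. -/
noncomputable def rev [Fintype V] [DecidableEq V] (w : V → V → ℝ) (t : HC V) : ℝ :=
  (1 / 2) * ∑ p ∈ Finset.univ.offDiag,
    w p.1 p.2 * ((Finset.univ \ t.cluster p.1 p.2).card : ℝ)

/-- Cohen-Addad et al.'s value: the same formula as cost, used for dissimilarity weights. -/
noncomputable def val [Fintype V] [DecidableEq V] (w : V → V → ℝ) (t : HC V) : ℝ :=
  cost w t

end HC

/-- The total weight `W`: the sum of `w i j` over unordered pairs of distinct vertices. -/
noncomputable def totalWeight {V : Type*} [Fintype V] [DecidableEq V] (w : V → V → ℝ) : ℝ :=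
  (1 / 2) * ∑ p ∈ Finset.univ.offDiag, w p.1 p.2

/-- The merge cost of merging disjoint clusters `A` and `B`. -/
noncomputable def mergeCost {V : Type*} [Fintype V] [DecidableEq V] (w : V → V → ℝ) (A B : Finset V) : ℝ :=
  (B.card : ℝ) * ∑ a ∈ A, ∑ c ∈ Finset.univ \ (A ∪ B), w a c
    + (A.card : ℝ) * ∑ b ∈ B, ∑ c ∈ Finset.univ \ (A ∪ B), w b c

/-- The merge revenue of merging disjoint clusters `A` and `B`. -/
noncomputable def mergeRev {V : Type*} [Fintype V] (w : V → V → ℝ) (A B : Finset V) : ℝ :=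
  ((Fintype.card V : ℝ) - (A.card : ℝ) - (B.card : ℝ)) * ∑ a ∈ A, ∑ b ∈ B, w a b

/-- The average linkage between disjoint nonempty clusters `A` and `B`. -/
noncomputable def avgLinkage {V : Type*} (w : V → V → ℝ) (A B : Finset V) : ℝ :=
  (1 / ((A.card : ℝ) * (B.card : ℝ))) * ∑ a ∈ A, ∑ b ∈ B, w a b

/-- A matching encoded as an involution `f : V → V`: the matched pairs are the pairs
`{v, f v}` with `f v ≠ v`; its weight is the sum of weights of matched pairs. -/
noncomputable def matchingWeight {V : Type*} [Fintype V] [DecidableEq V] (w : V → V → ℝ) (f : V → V) : ℝ :=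
  (1 / 2) * ∑ v ∈ Finset.univ.filter (fun v => f v ≠ v), w v (f v)

/-- A perfect matching encoded as a fixed-point-free involution. -/
def IsPerfectMatching {V : Type*} (f : V → V) : Prop :=
  (∀ v, f (f v) = v) ∧ ∀ v, f v ≠ v

/-!
The round robin splits the edges of the complete graph on `Option (ℤ/(m-1))` into `m - 1`
perfect matchings: the `k`-th pairs `none` with `k` and `x` with `2k - x`. Since `m - 1` is
odd, `2` is invertible, so these have no fixed points and `x ≠ y` lie in exactly one of them,
the one with `2k = x + y`. All perfect matchings of `V` are conjugate (they are the
permutations of cycle type `2, …, 2`), so `V` can be relabelled to make `σ` the `0`-th factor.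
The pairs outside `σ` are then covered exactly once by the other `m - 2` factors, each of weight
at most the maximum.
-/

theorem IsPerfectMatching.conj {V W : Type*} {f : W → W} (hf : IsPerfectMatching f)
    (e : V ≃ W) :
    IsPerfectMatching (e.symm ∘ f ∘ e) :=
  ⟨fun v => by simp [hf.1 (e v)], fun v h => hf.2 (e v) (by simpa using congrArg e h)⟩

theorem IsPerfectMatching.cycleType_toPerm {V : Type*} [Fintype V] [DecidableEq V]
    {f : V → V} (hf : IsPerfectMatching f) :
    (Function.Involutive.toPerm f hf.1).cycleType =
      Multiset.replicate (Fintype.card V / 2) 2 := by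
  set τ := Function.Involutive.toPerm f hf.1
  have hτ : τ.cycleType = Multiset.replicate τ.cycleType.card 2 :=
    Equiv.Perm.cycleType_of_pow_prime_eq_one (Equiv.ext fun v => hf.1 v)
  have hsupp : τ.support = univ := eq_univ_of_forall fun v => Equiv.Perm.mem_support.mpr (hf.2 v)
  have hsum := τ.sum_cycleType
  rw [hsupp, card_univ, hτ, Multiset.sum_replicate, smul_eq_mul] at hsum
  rw [hτ, ← hsum, Nat.mul_div_cancel _ two_pos]

theorem IsPerfectMatching.exists_equiv_conj {V W : Type*} [Fintype V] [DecidableEq V]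
    [Fintype W] {f : V → V} {g : W → W} (hf : IsPerfectMatching f) (hg : IsPerfectMatching g)
    (hcard : Fintype.card V = Fintype.card W) :
    ∃ e : V ≃ W, ∀ v, e (f v) = g (e v) := by
  set e₀ := Fintype.equivOfCardEq hcard
  have hg' := hg.conj e₀
  obtain ⟨c, hc⟩ := isConj_iff.mp <| Equiv.Perm.isConj_iff_cycleType_eq.mpr <|
    hf.cycleType_toPerm.trans hg'.cycleType_toPerm.symm
  refine ⟨c.trans e₀, fun v => ?_⟩
  have hcv : c (f v) = e₀.symm (g (e₀ (c v))) := by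
    have := congrArg (· (c v)) hc
    simp only [Equiv.Perm.mul_apply, Equiv.Perm.inv_def, Equiv.symm_apply_apply] at this
    exact this
  simp [hcv]

section RoundRobin

variable {R : Type*} [CommRing R] [DecidableEq R]

def roundRobin (k : R) : Option R → Option R
  | none => some k
  | some x => if x = k then none else some (2 * k - x)

theorem roundRobin_involutive (k : R) : Function.Involutive (roundRobin k) := by
  rintro (_ | x)
  · simp [roundRobin]
  · by_cases h : x = k
    · simp [roundRobin, h]
    · have h' : 2 * k - x ≠ k := fun h' => h (by linear_combination -h')
      simp only [roundRobin, if_neg h, if_neg h']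
      ring_nf

theorem isPerfectMatching_roundRobin (h2 : IsUnit (2 : R)) (k : R) :
    IsPerfectMatching (roundRobin k) := by
  refine ⟨roundRobin_involutive k, ?_⟩
  rintro (_ | x)
  · simp [roundRobin]
  · by_cases h : x = k
    · simp [roundRobin, h]
    · simp only [roundRobin, if_neg h, ne_eq, Option.some.injEq]
      intro hx
      exact h (sub_eq_zero.mp (h2.mul_left_cancel (by linear_combination hx))).symm

theorem roundRobin_left_injective (h2 : IsUnit (2 : R)) (a : Option R) :
    Function.Injective fun k => roundRobin k a := by
  intro k k' h
  rcases a with _ | x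
  · simpa [roundRobin] using h
  · by_cases hk : x = k <;> by_cases hk' : x = k' <;> simp_all [roundRobin]
    exact h2.mul_left_cancel h

theorem exists_roundRobin_eq (h2 : IsUnit (2 : R)) {a b : Option R} (hab : a ≠ b) :
    ∃ k, roundRobin k a = b := by
  rcases a with _ | x <;> rcases b with _ | y
  · exact absurd rfl hab
  · exact ⟨y, rfl⟩
  · exact ⟨x, if_pos rfl⟩
  · obtain ⟨c, hc⟩ : ∃ c, 2 * c = x + y :=
      ⟨↑h2.unit⁻¹ * (x + y), by rw [← mul_assoc, h2.mul_val_inv, one_mul]⟩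
    have hxy : x ≠ y := by simpa using hab
    have hxc : x ≠ c := by
      rintro rfl
      exact hxy (by linear_combination hc)
    exact ⟨c, by simp [roundRobin, hxc]; linear_combination hc⟩

theorem exists_oneFactorization [Fintype R] {V : Type*} [Fintype V] [DecidableEq V]
    (h2 : IsUnit (2 : R)) (hcard : Fintype.card V = Fintype.card R + 1)
    {σ : V → V} (hσ : IsPerfectMatching σ) :
    ∃ F : R → V → V, (∀ k, IsPerfectMatching (F k)) ∧ F 0 = σ ∧
      (∀ v, Function.Injective fun k => F k v) ∧ ∀ u v, u ≠ v → ∃ k, F k u = v := by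
  obtain ⟨e, he⟩ := hσ.exists_equiv_conj (isPerfectMatching_roundRobin h2 0)
    (by rw [hcard, Fintype.card_option])
  refine ⟨fun k => e.symm ∘ roundRobin k ∘ e,
    fun k => (isPerfectMatching_roundRobin h2 k).conj e, funext fun v => by simp [← he],
    fun v k k' h => ?_, fun u v huv => ?_⟩
  · exact roundRobin_left_injective h2 (e v) (e.symm.injective h)
  · obtain ⟨k, hk⟩ := exists_roundRobin_eq h2 (e.injective.ne huv)
    exact ⟨k, by simp [hk]⟩

end RoundRobin

theorem exists_ne_zero_factor_eq_iff {R V : Type*} [Zero R] {F : R → V → V}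
    (hfix : ∀ k v, F k v ≠ v) (hinj : ∀ v, Function.Injective fun k => F k v)
    (hcover : ∀ u v, u ≠ v → ∃ k, F k u = v) (u v : V) :
    (∃ k ≠ 0, F k u = v) ↔ u ≠ v ∧ F 0 u ≠ v := by
  constructor
  · rintro ⟨k, hk, rfl⟩
    exact ⟨(hfix k u).symm, fun h => hk (hinj u h).symm⟩
  · rintro ⟨huv, h0⟩
    obtain ⟨k, rfl⟩ := hcover u v huv
    exact ⟨k, fun hk => h0 (hk ▸ rfl), rfl⟩

theorem sum_eq_sum_sum_of_factors {ι V M : Type*} [Fintype V] [AddCommMonoid M]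
    (F : ι → V → V) (hinj : ∀ v, Function.Injective fun k => F k v) (K : Finset ι)
    (P : Finset (V × V)) (hP : ∀ u v, (u, v) ∈ P ↔ ∃ k ∈ K, F k u = v)
    (g : V → V → M) :
    ∑ p ∈ P, g p.1 p.2 = ∑ k ∈ K, ∑ v, g v (F k v) := by
  rw [← sum_product']
  refine (sum_nbij (fun x : ι × V => (x.2, F x.1 x.2)) ?_ ?_ ?_ fun _ _ => rfl).symm
  · rintro ⟨k, v⟩ hkv
    exact (hP _ _).mpr ⟨k, (mem_product.mp hkv).1, rfl⟩
  · rintro ⟨k, v⟩ - ⟨k', v'⟩ - h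
    simp only [Prod.mk.injEq] at h
    obtain ⟨rfl, h⟩ := h
    rw [hinj v h]
  · rintro ⟨u, v⟩ huv
    obtain ⟨k, hk, rfl⟩ := (hP u v).mp huv
    exact ⟨(k, u), mem_product.mpr ⟨hk, mem_univ u⟩, rfl⟩

theorem IsPerfectMatching.matchingWeight_le_iSup {V : Type*} [Fintype V] [DecidableEq V]
    (w : V → V → ℝ) {f : V → V} (hf : IsPerfectMatching f) :
    matchingWeight w f ≤ ⨆ M' : {f : V → V // IsPerfectMatching f}, matchingWeight w M'.1 :=
  le_ciSup (Finite.bddAbove_range fun M' : {f : V → V // IsPerfectMatching f} =>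
    matchingWeight w M'.1) ⟨f, hf⟩

theorem matchingWeight_eq_of_isPerfectMatching {V : Type*} [Fintype V] [DecidableEq V]
    (w : V → V → ℝ) {f : V → V} (hf : IsPerfectMatching f) :
    matchingWeight w f = (1 / 2) * ∑ v, w v (f v) := by
  rw [matchingWeight, filter_true_of_mem fun v _ => hf.2 v]

theorem stmt7_general {V : Type*} [Fintype V] [DecidableEq V] (m : ℕ) (hm : 2 ≤ m)
    (hm2 : Even m) (hcard : Fintype.card V = m)
    (w : V → V → ℝ)
    (σ : V → V) (hσ : IsPerfectMatching σ) :
    (1 / 2) * ∑ p ∈ Finset.univ.offDiag.filter (fun p : V × V => σ p.1 ≠ p.2), w p.1 p.2 ≤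
      ((m : ℝ) - 2) * ⨆ M' : {f : V → V // IsPerfectMatching f}, matchingWeight w M'.1 := by
  obtain ⟨q, rfl⟩ : ∃ q, m = q + 1 := ⟨m - 1, by omega⟩
  have hq : Odd q := by simpa [Nat.even_add_one] using hm2
  have : NeZero q := ⟨hq.pos.ne'⟩
  have h2 : IsUnit (2 : ZMod q) := by
    exact_mod_cast (ZMod.isUnit_iff_coprime 2 q).mpr hq.coprime_two_left
  obtain ⟨F, hF, rfl, hinj, hcover⟩ :=
    exists_oneFactorization h2 (by rw [hcard, ZMod.card]) hσ
  have hP : ∀ u v, (u, v) ∈ univ.offDiag.filter (fun p : V × V => F 0 p.1 ≠ p.2) ↔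
      ∃ k ∈ univ.erase 0, F k u = v := fun u v => by
    simp only [mem_filter, mem_offDiag, mem_univ, true_and, mem_erase, and_true]
    exact (exists_ne_zero_factor_eq_iff (fun k => (hF k).2) hinj hcover u v).symm
  calc _ = ∑ k ∈ univ.erase 0, matchingWeight w (F k) := by
        simp only [sum_eq_sum_sum_of_factors F hinj _ _ hP, mul_sum,
          matchingWeight_eq_of_isPerfectMatching w (hF _)]
    _ ≤ ∑ _k ∈ univ.erase (0 : ZMod q),
          ⨆ M' : {f : V → V // IsPerfectMatching f}, matchingWeight w M'.1 :=
        sum_le_sum fun k _ => (hF k).matchingWeight_le_iSup w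
    _ = _ := by
        rw [sum_const, card_erase_of_mem (mem_univ _), card_univ, ZMod.card, nsmul_eq_mul,
          Nat.cast_sub (by omega)]
        push_cast
        ring

/-- For even `m ≥ 2`, a set `V` of `m` elements with a symmetric nonnegative weight
function `w`, and a perfect matching `σ` on `V`, the total weight of the unordered pairs
not in the matching is at most `(m − 2)` times the maximum weight of a perfect matching. -/
theorem stmt7 {V : Type*} [Fintype V] [DecidableEq V] (m : ℕ) (hm : 2 ≤ m)
    (hm2 : Even m) (hcard : Fintype.card V = m)
    (w : V → V → ℝ) (hsymm : ∀ i j, w i j = w j i) (hnonneg : ∀ i j, 0 ≤ w i j)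
    (σ : V → V) (hσ : IsPerfectMatching σ) :
    (1 / 2) * ∑ p ∈ Finset.univ.offDiag.filter (fun p : V × V => σ p.1 ≠ p.2), w p.1 p.2 ≤
      ((m : ℝ) - 2) * ⨆ M' : {f : V → V // IsPerfectMatching f}, matchingWeight w M'.1 :=
  stmt7_general m hm hm2 hcard w σ hσ
end

section
/- Let n ≥ 1 and let (V,w) be the weighted graph on n vertices in which every unordered pair of distinct vertices has weight 1. Then every hierarchical clustering tree T on V satisfies cost(T) = (n³ − n)/3. -/
open Finset

/-!
Let `S(T) = ∑_{i,j} |leaves(T[i ∨ j])|` over ordered pairs of leaves, the diagonal included.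
Pairs inside one child of the root keep their cluster, while each of the `2ab` pairs split
between children of sizes `a` and `b` has the whole tree, of size `a + b`, as cluster. Hence
`S = S_l + S_r + 2ab(a + b)`, and since `(a + b)³ = a³ + b³ + 3ab(a + b)` this recursion, with
`S(leaf) = 1`, gives `3 S(T) = 2m³ + m` for every tree with `m` leaves, whatever its shape.
Removing the `m` diagonal terms and halving yields `(n³ - n)/3`.
-/

namespace HC

variable {V : Type*} [DecidableEq V]

@[simp]
lemma leaves_leaf (v : V) : (leaf v).leaves = {v} := rfl

@[simp]
lemma leaves_node (l r : HC V) : (node l r).leaves = l.leaves ∪ r.leaves := by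
  simp [leaves, leafList]

lemma disjoint_leaves_of_nodup {l r : HC V} (h : (node l r).leafList.Nodup) :
    Disjoint l.leaves r.leaves := by
  rw [leafList, List.nodup_append] at h
  exact Finset.disjoint_left.2 fun a hl hr =>
    h.2.2 a (List.mem_toFinset.1 hl) a (List.mem_toFinset.1 hr) rfl

lemma cluster_self {t : HC V} {i : V} (hi : i ∈ t.leaves) : t.cluster i i = {i} := by
  induction t with
  | leaf v => rw [leaves_leaf, Finset.mem_singleton] at hi; rw [hi, cluster]
  | node l r ihl ihr =>
    rw [leaves_node, Finset.mem_union] at hi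
    by_cases hl : i ∈ l.leaves
    · simp [cluster, hl, ihl hl]
    · have hr := hi.resolve_left hl
      simp [cluster, hl, hr, ihr hr]

section Node

variable {l r : HC V} {i j : V}

lemma cluster_node_left (hi : i ∈ l.leaves) (hj : j ∈ l.leaves) :
    (node l r).cluster i j = l.cluster i j := by
  simp [cluster, hi, hj]

lemma cluster_node_right (hlr : Disjoint l.leaves r.leaves) (hi : i ∈ r.leaves)
    (hj : j ∈ r.leaves) : (node l r).cluster i j = r.cluster i j := by
  simp [cluster, hi, hj, Finset.disjoint_right.1 hlr hi]

lemma cluster_node_eq_leaves (hl : ¬(i ∈ l.leaves ∧ j ∈ l.leaves))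
    (hr : ¬(i ∈ r.leaves ∧ j ∈ r.leaves)) : (node l r).cluster i j = (node l r).leaves := by
  rw [cluster, if_neg hl, if_neg hr]

end Node

def clusterCardSum (t : HC V) : ℕ :=
  ∑ i ∈ t.leaves, ∑ j ∈ t.leaves, (t.cluster i j).card

lemma clusterCardSum_node {l r : HC V} (hlr : Disjoint l.leaves r.leaves) :
    (node l r).clusterCardSum = l.clusterCardSum + r.clusterCardSum
      + 2 * (l.leaves.card * r.leaves.card * (l.leaves.card + r.leaves.card)) := by
  have hcross : ∀ i j,
      (i ∈ l.leaves ∧ j ∈ r.leaves) ∨ (i ∈ r.leaves ∧ j ∈ l.leaves) →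
      ((node l r).cluster i j).card = l.leaves.card + r.leaves.card := by
    rintro i j (⟨hi, hj⟩ | ⟨hi, hj⟩) <;>
    rw [cluster_node_eq_leaves, leaves_node, Finset.card_union_of_disjoint hlr] <;>
    simp [Finset.disjoint_left.1 hlr, Finset.disjoint_right.1 hlr, hi, hj]
  have hsumLL :
      ∑ i ∈ l.leaves, ∑ j ∈ l.leaves, ((node l r).cluster i j).card = l.clusterCardSum :=
    Finset.sum_congr rfl fun i hi => Finset.sum_congr rfl fun j hj => by
      rw [cluster_node_left hi hj]
  have hsumRR :
      ∑ i ∈ r.leaves, ∑ j ∈ r.leaves, ((node l r).cluster i j).card = r.clusterCardSum :=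
    Finset.sum_congr rfl fun i hi => Finset.sum_congr rfl fun j hj => by
      rw [cluster_node_right hlr hi hj]
  have hsumLR : ∑ i ∈ l.leaves, ∑ j ∈ r.leaves, ((node l r).cluster i j).card
      = l.leaves.card * r.leaves.card * (l.leaves.card + r.leaves.card) := by
    rw [Finset.sum_congr rfl fun i hi => Finset.sum_congr rfl fun j hj =>
      hcross i j (.inl ⟨hi, hj⟩)]
    simp [mul_assoc]
  have hsumRL : ∑ i ∈ r.leaves, ∑ j ∈ l.leaves, ((node l r).cluster i j).card
      = l.leaves.card * r.leaves.card * (l.leaves.card + r.leaves.card) := by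
    rw [Finset.sum_congr rfl fun i hi => Finset.sum_congr rfl fun j hj =>
      hcross i j (.inr ⟨hi, hj⟩)]
    simp [mul_assoc, mul_left_comm]
  rw [clusterCardSum, leaves_node]
  simp only [Finset.sum_union hlr, Finset.sum_add_distrib]
  rw [hsumLL, hsumRR, hsumLR, hsumRL]
  ring

theorem three_mul_clusterCardSum {t : HC V} (ht : t.leafList.Nodup) :
    3 * t.clusterCardSum = 2 * t.leaves.card ^ 3 + t.leaves.card := by
  induction t with
  | leaf v => simp [clusterCardSum, cluster]
  | node l r ihl ihr =>
    have hlr := disjoint_leaves_of_nodup ht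
    rw [leafList, List.nodup_append] at ht
    rw [clusterCardSum_node hlr, leaves_node, Finset.card_union_of_disjoint hlr]
    linear_combination ihl ht.1 + ihr ht.2.1

lemma sum_offDiag_card_cluster_add_card (t : HC V) :
    ∑ p ∈ t.leaves.offDiag, (t.cluster p.1 p.2).card + t.leaves.card = t.clusterCardSum := by
  rw [clusterCardSum, ← Finset.sum_product', ← Finset.diag_union_offDiag,
    Finset.sum_union (Finset.disjoint_diag_offDiag _), add_comm, Finset.diag, Finset.sum_map]
  congr 1
  rw [Finset.card_eq_sum_ones]
  exact Finset.sum_congr rfl fun i hi => by simp [Function.diag, cluster_self hi]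

end HC

theorem stmt11_general (n : ℕ)
    (t : HC (Fin n)) (ht : t.IsTreeOn) :
    HC.cost (fun i j => if i = j then 0 else 1) t = ((n : ℝ) ^ 3 - (n : ℝ)) / 3 := by
  obtain ⟨hnodup, huniv⟩ := ht
  have hcount := HC.three_mul_clusterCardSum hnodup
  rw [← HC.sum_offDiag_card_cluster_add_card, huniv, Finset.card_univ, Fintype.card_fin]
    at hcount
  have hweight : ∑ p ∈ (Finset.univ : Finset (Fin n)).offDiag,
      (if p.1 = p.2 then (0 : ℝ) else 1) * ((t.cluster p.1 p.2).card : ℝ)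
        = ∑ p ∈ Finset.univ.offDiag, ((t.cluster p.1 p.2).card : ℝ) :=
    Finset.sum_congr rfl fun p hp => by simp [(Finset.mem_offDiag.1 hp).2.2]
  rw [HC.cost, hweight]
  have hcount' := congrArg (Nat.cast : ℕ → ℝ) hcount
  push_cast at hcount'
  linear_combination hcount' / 6

/-- On the complete graph on `n ≥ 1` vertices in which every unordered pair of distinct
vertices has weight `1`, every hierarchical clustering tree has cost `(n³ − n)/3`. -/
theorem stmt11 (n : ℕ) (hn : 1 ≤ n)
    (t : HC (Fin n)) (ht : t.IsTreeOn) :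
    HC.cost (fun i j => if i = j then 0 else 1) t = ((n : ℝ) ^ 3 - (n : ℝ)) / 3 :=
  stmt11_general n t ht
end
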